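/- arXiv:2302.07029 — 5 statements merged into one kernel-verified Lean document; each statement's English description precedes it below -/
import Mathlib

section
/- Let G be a finite abelian group and R ⊆ G such that R ≠ R + H for every non-trivial subgroup H of G (where R + H = {r + h : r ∈ R, h ∈ H}). Then for any subsets X, Y ⊆ G with |X| = |G| - |R| and |Y| ≥ 2, we have (X + Y) ∩ R ≠ ∅. -/
/-!
If `X + Y` misses `R`, then every translate `y + X` with `y ∈ Y` lies in the complement of `R`
and has the same size, so it *is* that complement. Two distinct `y₁, y₂ ∈ Y` then give
`(y₂ - y₁) + Rᶜ = Rᶜ`, i.e. the non-zero element `y₂ - y₁` stabilizes `R`, so `R` is a union of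
cosets of the non-trivial subgroup `stabilizer R`.
-/

open Pointwise

lemma Finset.eq_compl_of_disjoint_of_card_eq {α : Type*} [Fintype α] [DecidableEq α]
    {s t : Finset α} (hst : Disjoint s t) (hs : s.card = Fintype.card α - t.card) : s = tᶜ :=
  eq_of_subset_of_card_le (subset_compl_iff_disjoint_right.2 hst) (by rw [card_compl, hs])

namespace AddAction

lemma stabilizer_finset_compl {G α : Type*} [AddGroup G] [AddAction G α] [Fintype α]
    [DecidableEq α] (s : Finset α) : stabilizer G sᶜ = stabilizer G s := by
  ext a
  simp only [mem_stabilizer_finset, Finset.mem_compl, not_iff_not]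

lemma sub_mem_stabilizer_of_vadd_eq {G β : Type*} [AddGroup G] [AddAction G β] {a b : G}
    {x y : β} (ha : a +ᵥ x = y) (hb : b +ᵥ x = y) : b - a ∈ stabilizer G y := by
  rw [mem_stabilizer_iff, ← ha, vadd_vadd, sub_add_cancel, hb, ha]

lemma stabilizer_eq_bot_of_forall_add_ne {G : Type*} [AddCommGroup G] {s : Set G}
    (hs : ∀ H : AddSubgroup G, H ≠ ⊥ → s + (H : Set G) ≠ s) : stabilizer G s = ⊥ :=
  not_not.1 fun h ↦ hs _ h (add_stabilizer_self s)

end AddAction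

open AddAction in
/-- If `R ⊆ G` is not invariant under translation by any non-trivial subgroup, then for any
`X, Y ⊆ G` with `|X| = |G| - |R|` and `|Y| ≥ 2`, the sumset `X + Y` meets `R`. -/
theorem sumset_inter_target_nonempty {G : Type*} [AddCommGroup G] [Fintype G] [DecidableEq G]
    (R X Y : Finset G)
    (hR : ∀ H : AddSubgroup G, H ≠ ⊥ → (R : Set G) + (H : Set G) ≠ (R : Set G))
    (hX : X.card = Fintype.card G - R.card) (hY : 2 ≤ Y.card) :
    ((X + Y) ∩ R).Nonempty := by
  rw [← Finset.not_disjoint_iff_nonempty_inter]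
  intro hdisj
  have htranslate : ∀ y ∈ Y, y +ᵥ X = Rᶜ := fun y hy ↦
    Finset.eq_compl_of_disjoint_of_card_eq
      (hdisj.mono_left (add_comm Y X ▸ Finset.vadd_finset_subset_add hy))
      (by rw [Finset.card_vadd_finset, hX])
  obtain ⟨y₁, hy₁, y₂, hy₂, hne⟩ := Finset.one_lt_card.mp hY
  have hperiod : y₂ - y₁ ∈ stabilizer G R := stabilizer_finset_compl (G := G) R ▸
    sub_mem_stabilizer_of_vadd_eq (htranslate y₁ hy₁) (htranslate y₂ hy₂)
  rw [← stabilizer_coe_finset (G := G), stabilizer_eq_bot_of_forall_add_ne hR, AddSubgroup.mem_bot,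
    sub_eq_zero] at hperiod
  exact hne hperiod.symm
end

section
/- Let G be a finite abelian group, 𝓛 ⊆ 2^N a lattice on a finite set N represented by a directed acyclic graph H on vertex set N (X ∈ 𝓛 iff no arc of H enters X), γ : N → G, and r ∈ G. For X ∈ 𝓛 define C_X = {x ∈ X : every arc of H leaving x leaves X}. If the group-constrained lattice feasibility problem is feasible (some X ∈ 𝓛 has γ(X) = r), then there is a feasible X with |C_X| < |G|. -/
/-!
If `|C_X| ≥ |G|`, two of the prefix sums along an enumeration of `C_X` coincide, so `C_X`
contains a nonempty `Y` with `γ(Y) = 0`. Every arc leaving a vertex of `Y` leaves `X`, so no arc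
enters `X \ Y`; thus `X \ Y` is a smaller feasible set, and we iterate.
-/

open Finset

section ZeroSum

variable {ι G : Type*} [AddCommGroup G] [Fintype G]

theorem exists_ssubset_sum_sdiff_eq_zero [DecidableEq ι] (γ : ι → G) {P : ℕ → Finset ι} {n : ℕ}
    (hP : StrictMonoOn P (Set.Iic n)) (hn : Fintype.card G ≤ n) :
    ∃ i j, P i ⊂ P j ∧ ∑ x ∈ P j \ P i, γ x = 0 := by
  have hcard : #(univ : Finset G) < #(range (n + 1)) := by
    simpa [Nat.lt_succ_iff] using hn
  obtain ⟨i, hi, j, hj, hij, hsum⟩ := exists_ne_map_eq_of_card_lt_of_maps_to hcard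
    (f := fun k => ∑ x ∈ P k, γ x) (fun _ _ => mem_univ _)
  simp only [mem_range, Nat.lt_succ_iff] at hi hj
  wlog hlt : i < j generalizing i j
  · exact this j i hij.symm hsum.symm hj hi (by omega)
  have hss : P i ⊂ P j := hP (Set.mem_Iic.2 hi) (Set.mem_Iic.2 hj) hlt
  exact ⟨i, j, hss, by rw [sum_sdiff_eq_sub hss.subset, hsum, sub_self]⟩

theorem card_toFinset_take_toList [DecidableEq ι] (S : Finset ι) (k : ℕ) :
    #(S.toList.take k).toFinset = min k #S := by
  rw [List.toFinset_card_of_nodup ((List.take_sublist _ _).nodup S.nodup_toList),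
    List.length_take, length_toList]

theorem exists_nonempty_subset_sum_eq_zero [DecidableEq ι] (γ : ι → G) {S : Finset ι}
    (hS : Fintype.card G ≤ #S) : ∃ T ⊆ S, T.Nonempty ∧ ∑ x ∈ T, γ x = 0 := by
  set P : ℕ → Finset ι := fun k => (S.toList.take k).toFinset
  have hP : StrictMonoOn P (Set.Iic #S) := by
    intro i hi j hj hij
    refine Finset.ssubset_iff_subset_ne.2 ⟨?_, fun heq => ?_⟩
    · intro x hx
      rw [List.mem_toFinset] at hx ⊢
      exact (List.take_prefix_take_left hij.le).subset hx
    · have := congrArg card heq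
      simp only [P, card_toFinset_take_toList, Set.mem_Iic] at hi hj this
      omega
  obtain ⟨i, j, hij, hsum⟩ := exists_ssubset_sum_sdiff_eq_zero γ hP hS
  refine ⟨P j \ P i, fun x hx => ?_, sdiff_nonempty.2 (not_subset_of_ssubset hij), hsum⟩
  have hx : x ∈ S.toList := List.take_subset _ _ (List.mem_toFinset.1 (mem_sdiff.1 hx).1)
  exact mem_toList.1 hx

end ZeroSum

section Core

variable {N : Type*} [DecidableEq N] (A : N → N → Prop)

/-- Membership in the lattice `𝓛`: no arc of `A` enters `X`. -/
def IsPredClosed (X : Finset N) : Prop := ∀ u v, A u v → v ∈ X → u ∈ X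

/-- The set `C_X`. -/
def core [Fintype N] [DecidableRel A] (X : Finset N) : Finset N :=
  X.filter fun x => ∀ y, A x y → y ∉ X

variable {A} [Fintype N] [DecidableRel A]

theorem IsPredClosed.sdiff_of_subset_core {X Y : Finset N} (hX : IsPredClosed A X)
    (hY : Y ⊆ core A X) : IsPredClosed A (X \ Y) := by
  intro u v huv hv
  rw [mem_sdiff] at hv ⊢
  exact ⟨hX u v huv hv.1, fun hu => (mem_filter.1 (hY hu)).2 v huv hv.1⟩

theorem IsPredClosed.exists_sum_eq_card_core_lt {G : Type*} [AddCommGroup G] [Fintype G]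
    (γ : N → G) {X : Finset N} (hX : IsPredClosed A X) :
    ∃ Y, IsPredClosed A Y ∧ ∑ x ∈ Y, γ x = ∑ x ∈ X, γ x ∧ #(core A Y) < Fintype.card G := by
  induction X using Finset.strongInduction with
  | H X ih =>
  by_cases hsmall : #(core A X) < Fintype.card G
  · exact ⟨X, hX, rfl, hsmall⟩
  obtain ⟨T, hTcore, hTne, hTsum⟩ := exists_nonempty_subset_sum_eq_zero γ (not_lt.1 hsmall)
  have hTX : T ⊆ X := hTcore.trans (filter_subset _ _)
  obtain ⟨Y, hY, hsum, hcard⟩ :=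
    ih (X \ T) (sdiff_ssubset hTX hTne) (hX.sdiff_of_subset_core hTcore)
  refine ⟨Y, hY, ?_, hcard⟩
  rw [hsum, sum_sdiff_eq_sub hTX, hTsum, sub_zero]

end Core

theorem gclf_feasible_with_small_core_general {N : Type*} [Fintype N] [DecidableEq N]
    {G : Type*} [AddCommGroup G] [Fintype G]
    (A : N → N → Prop) [DecidableRel A]
    (γ : N → G) (r : G)
    (hfeas : ∃ X : Finset N, (∀ u v, A u v → v ∈ X → u ∈ X) ∧ ∑ x ∈ X, γ x = r) :
    ∃ X : Finset N, (∀ u v, A u v → v ∈ X → u ∈ X) ∧ ∑ x ∈ X, γ x = r ∧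
      (X.filter fun x => ∀ y, A x y → y ∉ X).card < Fintype.card G := by
  obtain ⟨X, hX, rfl⟩ := hfeas
  exact IsPredClosed.exists_sum_eq_card_core_lt γ hX

/-- For a lattice represented by a DAG `(N, A)` (where `X ∈ 𝓛` iff no arc enters `X`):
if some `X ∈ 𝓛` has `γ(X) = r`, then there is such an `X` whose set
`C_X = {x ∈ X : all out-arcs of x leave X}` satisfies `|C_X| < |G|`. -/
theorem gclf_feasible_with_small_core {N : Type*} [Fintype N] [DecidableEq N]
    {G : Type*} [AddCommGroup G] [Fintype G]
    (A : N → N → Prop) [DecidableRel A]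
    (hacyclic : ∀ x, ¬ Relation.TransGen A x x)
    (γ : N → G) (r : G)
    (hfeas : ∃ X : Finset N, (∀ u v, A u v → v ∈ X → u ∈ X) ∧ ∑ x ∈ X, γ x = r) :
    ∃ X : Finset N, (∀ u v, A u v → v ∈ X → u ∈ X) ∧ ∑ x ∈ X, γ x = r ∧
      (X.filter fun x => ∀ y, A x y → y ∉ X).card < Fintype.card G :=
  gclf_feasible_with_small_core_general A γ r hfeas
end

section
/- Let G be a finite abelian group, R ⊆ G, and X, Y ⊆ G non-empty finite subsets. If (X + Y) ∩ R = ∅ and |X| = |G| - |R|, then X + b₁ = X + b₂ for any b₁, b₂ ∈ Y; in particular if Y contains two distinct elements b₁ ≠ b₂ with h = b₁ - b₂, then X = X + ⟨h⟩ and R = R + ⟨h⟩, where ⟨h⟩ is the subgroup generated by h. -/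
/-!
`X + Y` misses `R`, so it has at most `|G| - |R| = |X|` elements; each translate `X + b`,
`b ∈ Y`, already has `|X|` elements, hence equals `X + Y`, which is then the whole complement
of `R`. Two equal translates `X + b₁ = X + b₂` put `b₁ - b₂` in the stabilizer of `X`; the
stabilizer of `R = (X + b₁)ᶜ` is that of `X`, and a set is a union of cosets of any subgroup
of its stabilizer.
-/

open Pointwise Finset AddAction

theorem AddAction.stabilizer_compl {G α : Type*} [AddGroup G] [AddAction G α] (s : Set α) :
    stabilizer G sᶜ = stabilizer G s := by
  ext c
  simp only [mem_stabilizer_set, Set.mem_compl_iff, not_iff_not]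

theorem Set.add_eq_self_of_le_stabilizer {G : Type*} [AddCommGroup G] {s : Set G}
    {H : AddSubgroup G} (hH : H ≤ stabilizer G s) : s + H = s :=
  (Set.add_subset_add_left hH).trans_eq (add_stabilizer_self s) |>.antisymm
    (Set.subset_add_left s H.zero_mem)

theorem Finset.add_singleton_eq_add_of_card_add_le {α : Type*} [Add α] [IsRightCancelAdd α]
    [DecidableEq α] {s t : Finset α} {b : α} (hb : b ∈ t) (h : #(s + t) ≤ #s) :
    s + {b} = s + t :=
  eq_of_subset_of_card_le (add_subset_add_left (singleton_subset_iff.2 hb))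
    (by rwa [card_add_singleton])

theorem Finset.sub_mem_stabilizer_of_add_singleton_eq {G : Type*} [AddCommGroup G]
    [DecidableEq G] {s : Finset G} {a b : G} (h : s + {a} = s + {b}) :
    a - b ∈ stabilizer G s := by
  rw [add_comm, singleton_add, add_comm, singleton_add] at h
  rw [mem_stabilizer_iff, sub_eq_neg_add, ← vadd_vadd, h, neg_vadd_vadd]

theorem translates_eq_and_coset_invariance_general {G : Type*} [AddCommGroup G] [Fintype G]
    [DecidableEq G] (R X Y : Finset G)
    (hdisj : (X + Y) ∩ R = ∅) (hcard : X.card = Fintype.card G - R.card) :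
    (∀ b₁ ∈ Y, ∀ b₂ ∈ Y, X + ({b₁} : Finset G) = X + ({b₂} : Finset G)) ∧
    (∀ b₁ ∈ Y, ∀ b₂ ∈ Y, b₁ ≠ b₂ →
      (X : Set G) + ((AddSubgroup.zmultiples (b₁ - b₂) : AddSubgroup G) : Set G) = X ∧
      (R : Set G) + ((AddSubgroup.zmultiples (b₁ - b₂) : AddSubgroup G) : Set G) = R) := by
  have hsub : X + Y ⊆ Rᶜ := subset_compl_iff_disjoint_right.2 (disjoint_iff_inter_eq_empty.2 hdisj)
  have hcompl : #Rᶜ = #X := by rw [card_compl, hcard]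
  have htrans : ∀ b ∈ Y, X + {b} = X + Y := fun b hb ↦
    add_singleton_eq_add_of_card_add_le hb (hcompl ▸ card_le_card hsub)
  refine ⟨fun b₁ hb₁ b₂ hb₂ ↦ (htrans b₁ hb₁).trans (htrans b₂ hb₂).symm,
    fun b₁ hb₁ b₂ hb₂ _ ↦ ?_⟩
  have hXstab : AddSubgroup.zmultiples (b₁ - b₂) ≤ stabilizer G (X : Set G) := by
    rw [AddSubgroup.zmultiples_le, stabilizer_coe_finset]
    exact sub_mem_stabilizer_of_add_singleton_eq ((htrans b₁ hb₁).trans (htrans b₂ hb₂).symm)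
  have hR : R = (b₁ +ᵥ X)ᶜ := by
    rw [eq_compl_comm, ← singleton_add, add_comm]
    exact eq_of_subset_of_card_le ((htrans b₁ hb₁).trans_subset hsub)
      (by rw [hcompl, card_add_singleton])
  have hRstab : stabilizer G (R : Set G) = stabilizer G (X : Set G) := by
    rw [hR, coe_compl, AddAction.stabilizer_compl, coe_vadd_finset, stabilizer_vadd_eq_right]
  exact ⟨Set.add_eq_self_of_le_stabilizer hXstab,
    Set.add_eq_self_of_le_stabilizer (hRstab ▸ hXstab)⟩

/-- If `(X + Y) ∩ R = ∅` and `|X| = |G| - |R|`, then all translates `X + b`, `b ∈ Y`,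
coincide; in particular, for distinct `b₁, b₂ ∈ Y` with `h = b₁ - b₂`, both `X` and `R`
are invariant under adding the subgroup `⟨h⟩`. -/
theorem translates_eq_and_coset_invariance {G : Type*} [AddCommGroup G] [Fintype G]
    [DecidableEq G] (R X Y : Finset G) (hX : X.Nonempty) (hY : Y.Nonempty)
    (hdisj : (X + Y) ∩ R = ∅) (hcard : X.card = Fintype.card G - R.card) :
    (∀ b₁ ∈ Y, ∀ b₂ ∈ Y, X + ({b₁} : Finset G) = X + ({b₂} : Finset G)) ∧
    (∀ b₁ ∈ Y, ∀ b₂ ∈ Y, b₁ ≠ b₂ →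
      (X : Set G) + ((AddSubgroup.zmultiples (b₁ - b₂) : AddSubgroup G) : Set G) = X ∧
      (R : Set G) + ((AddSubgroup.zmultiples (b₁ - b₂) : AddSubgroup G) : Set G) = R) :=
  translates_eq_and_coset_invariance_general R X Y hdisj hcard
end

section
/- Define f : ℕ × ℕ → ℝ by suitable recursion bounds: suppose f(n, 0) = 0 for all n ≥ 1, f(n, d) = 1 for n ≤ 3 and d > 0, and for n ≥ 4, d ∈ {1,2,3}, there exists p with 2 ≤ p ≤ ⌊n/2⌋ such that f(n,d) ≤ (d+1)³ f(p,d) + d(d+1)² f(n-p, d-1) + f(n-p+1, d). Then f(n,d) ≤ (d+1)^{3d} · n^{d + 3·log₂(d+1) + 2} for all n ≥ 1 and d ∈ {0,1,2,3}. -/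
/-! Write `B(d, n) = (d+1)^{3d} n^{e(d)}` with `e(d) = d + 3 log₂(d+1) + 2`, and prove
`f(n, d) ≤ B(d, n)` by strong induction on `n`. Relative to `B(d, n)`, the three terms of the
recursion are at most `(p/n)²`, `(n-p)/n²` and `((n-p+1)/n)²`: the factor `(d+1)³` of the
first is absorbed by `(p/n)^{3 log₂(d+1)} ≤ 2^{-3 log₂(d+1)} = (d+1)^{-3}` as `p ≤ n/2`, and in
the second the drop from `B(d, ·)` to `B(d-1, ·)` pays for `d(d+1)²` and for one power of
`n - p`. Since `p² + (n-p) + (n-p+1)² ≤ n²`, the three fractions sum to at most `1`. -/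

open Real

noncomputable def callExponent (d : ℕ) : ℝ := d + 3 * logb 2 ((d : ℝ) + 1) + 2

noncomputable def callBound (d n : ℕ) : ℝ :=
  ((d : ℝ) + 1) ^ (3 * d) * (n : ℝ) ^ callExponent d

lemma two_le_callExponent (d : ℕ) : 2 ≤ callExponent d := by
  have : 0 ≤ logb 2 ((d : ℝ) + 1) := logb_nonneg one_lt_two (by simp)
  have : (0 : ℝ) ≤ d := d.cast_nonneg
  unfold callExponent
  linarith

lemma callBound_nonneg (d n : ℕ) : 0 ≤ callBound d n := by
  unfold callBound
  positivity

lemma one_le_callBound (d : ℕ) {n : ℕ} (hn : 1 ≤ n) : 1 ≤ callBound d n :=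
  one_le_mul_of_one_le_of_one_le (one_le_pow₀ (by simp))
    (one_le_rpow (by exact_mod_cast hn) (by linarith [two_le_callExponent d]))

lemma callBound_eq_div_rpow_mul (d m : ℕ) {n : ℕ} (hn : 0 < n) :
    callBound d m = ((m : ℝ) / n) ^ callExponent d * callBound d n := by
  have : (0 : ℝ) < (n : ℝ) ^ callExponent d := by positivity
  rw [callBound, callBound, div_rpow (by positivity) (by positivity)]
  field_simp

lemma half_rpow_three_mul_logb {c : ℝ} (hc : 0 < c) :
    (1 / 2 : ℝ) ^ (3 * logb 2 c) = (c ^ 3)⁻¹ := by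
  rw [one_div, inv_rpow zero_le_two, mul_comm, rpow_mul zero_le_two,
    rpow_logb two_pos (by norm_num) hc, rpow_ofNat]

lemma pow_three_mul_rpow_le_sq {c x a : ℝ} (hc : 1 ≤ c) (hx : 0 < x) (hx2 : x ≤ 1 / 2)
    (ha : 0 ≤ a) : c ^ 3 * x ^ (a + 3 * logb 2 c + 2) ≤ x ^ 2 := by
  have hlog : 0 ≤ logb 2 c := logb_nonneg one_lt_two hc
  have hsmall : x ^ (a + 3 * logb 2 c) ≤ (c ^ 3)⁻¹ :=
    calc x ^ (a + 3 * logb 2 c) ≤ (1 / 2) ^ (a + 3 * logb 2 c) :=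
          rpow_le_rpow hx.le hx2 (by positivity)
      _ ≤ (1 / 2) ^ (3 * logb 2 c) :=
          rpow_le_rpow_of_exponent_ge (by norm_num) (by norm_num) (by linarith)
      _ = (c ^ 3)⁻¹ := half_rpow_three_mul_logb (by linarith)
  have hc3 : 0 < c ^ 3 := by positivity
  calc c ^ 3 * x ^ (a + 3 * logb 2 c + 2) = c ^ 3 * x ^ (a + 3 * logb 2 c) * x ^ 2 := by
        rw [rpow_add hx, rpow_two]; ring
    _ ≤ c ^ 3 * (c ^ 3)⁻¹ * x ^ 2 := by gcongr
    _ = x ^ 2 := by rw [mul_inv_cancel₀ hc3.ne', one_mul]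

lemma callBound_le_sq_mul (d : ℕ) {m n : ℕ} (hmn : m ≤ n) (hn : 0 < n) :
    callBound d m ≤ ((m : ℝ) / n) ^ 2 * callBound d n := by
  have hx1 : (m : ℝ) / n ≤ 1 := div_le_one_of_le₀ (by exact_mod_cast hmn) (by positivity)
  rw [callBound_eq_div_rpow_mul d m hn, ← rpow_two]
  exact mul_le_mul_of_nonneg_right (rpow_le_rpow_of_exponent_ge' (by positivity) hx1 zero_le_two
    (two_le_callExponent d)) (callBound_nonneg d n)

lemma pow_three_mul_callBound_le (d : ℕ) {p n : ℕ} (hp : 0 < p) (hpn : 2 * p ≤ n) :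
    ((d : ℝ) + 1) ^ 3 * callBound d p ≤ ((p : ℝ) / n) ^ 2 * callBound d n := by
  have hn : 0 < n := by omega
  have : (0 : ℝ) < p := by exact_mod_cast hp
  have hhalf : (p : ℝ) / n ≤ 1 / 2 := by
    rw [div_le_iff₀ (by positivity)]
    have : (2 * p : ℝ) ≤ n := by exact_mod_cast hpn
    linarith
  rw [callBound_eq_div_rpow_mul d p hn, ← mul_assoc]
  gcongr
  · exact callBound_nonneg d n
  · exact pow_three_mul_rpow_le_sq (by simp) (by positivity) hhalf d.cast_nonneg

lemma mul_sq_mul_pow_le_pow_add_three {a b : ℝ} (ha : 0 ≤ a) (hab : a ≤ b) (k : ℕ) :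
    a * b ^ 2 * a ^ k ≤ b ^ (k + 3) :=
  calc a * b ^ 2 * a ^ k = a ^ (k + 1) * b ^ 2 := by ring
    _ ≤ b ^ (k + 1) * b ^ 2 := by gcongr
    _ = b ^ (k + 3) := by ring

lemma callExponent_sub_one_le (d : ℕ) : callExponent d - 1 ≤ callExponent (d + 1) - 2 := by
  have : logb 2 ((d : ℝ) + 1) ≤ logb 2 ((d : ℝ) + 1 + 1) :=
    logb_le_logb_of_le one_lt_two (by positivity) (by linarith)
  simp only [callExponent]
  push_cast
  linarith

lemma rpow_le_div_sq_mul_rpow {q n a b : ℝ} (hq : 1 ≤ q) (hqn : q ≤ n) (ha : 1 ≤ a)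
    (hab : a - 1 ≤ b - 2) : q ^ a ≤ q / n ^ 2 * n ^ b := by
  have hn : 0 < n := by linarith
  calc q ^ a = q * q ^ (a - 1) := by
        rw [← rpow_one_add' (by linarith) (by linarith), add_sub_cancel]
    _ ≤ q * n ^ (b - 2) := by
        gcongr
        exact (rpow_le_rpow (by linarith) hqn (by linarith)).trans
          (rpow_le_rpow_of_exponent_le (hq.trans hqn) hab)
    _ = q / n ^ 2 * n ^ b := by
        rw [rpow_sub hn, rpow_two]
        field_simp

lemma mul_sq_mul_callBound_pred_le {d q n : ℕ} (hd : 1 ≤ d) (hq : 1 ≤ q) (hqn : q ≤ n) :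
    (d : ℝ) * ((d : ℝ) + 1) ^ 2 * callBound (d - 1) q ≤
      (q : ℝ) / (n : ℝ) ^ 2 * callBound d n := by
  obtain ⟨d, rfl⟩ : ∃ d', d = d' + 1 := ⟨d - 1, by omega⟩
  have hcoef := mul_sq_mul_pow_le_pow_add_three (a := (d : ℝ) + 1)
    (b := ((d + 1 : ℕ) : ℝ) + 1) (by positivity) (by push_cast; linarith) (3 * d)
  have hpow := rpow_le_div_sq_mul_rpow (q := q) (n := n) (by exact_mod_cast hq)
    (by exact_mod_cast hqn) (by linarith [two_le_callExponent d]) (callExponent_sub_one_le d)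
  rw [Nat.add_sub_cancel, callBound, callBound, show 3 * (d + 1) = 3 * d + 3 by ring]
  calc ((d + 1 : ℕ) : ℝ) * (((d + 1 : ℕ) : ℝ) + 1) ^ 2 * (((d : ℝ) + 1) ^ (3 * d) *
        (q : ℝ) ^ callExponent d)
      = ((d : ℝ) + 1) * (((d + 1 : ℕ) : ℝ) + 1) ^ 2 * ((d : ℝ) + 1) ^ (3 * d) *
        (q : ℝ) ^ callExponent d := by push_cast; ring
    _ ≤ (((d + 1 : ℕ) : ℝ) + 1) ^ (3 * d + 3) *
        ((q : ℝ) / (n : ℝ) ^ 2 * (n : ℝ) ^ callExponent (d + 1)) :=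
        mul_le_mul hcoef hpow (by positivity) (by positivity)
    _ = _ := by ring

lemma sq_add_add_add_one_sq_le {p q : ℝ} (hp : 2 ≤ p) (hq : 1 ≤ q) :
    p ^ 2 + q + (q + 1) ^ 2 ≤ (p + q) ^ 2 := by
  nlinarith

lemma callBound_recursion {d p q : ℕ} (hd : 1 ≤ d) (hp : 2 ≤ p) (hpq : p ≤ q) :
    ((d : ℝ) + 1) ^ 3 * callBound d p + (d : ℝ) * ((d : ℝ) + 1) ^ 2 * callBound (d - 1) q
      + callBound d (q + 1) ≤ callBound d (p + q) := by
  have hn : 0 < p + q := by omega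
  have hP : (2 : ℝ) ≤ p := by exact_mod_cast hp
  have hQ : (2 : ℝ) ≤ q := by exact_mod_cast hp.trans hpq
  have hN : (0 : ℝ) < (p + q : ℕ) := by positivity
  have hsum : ((p : ℝ) / (p + q : ℕ)) ^ 2 + (q : ℝ) / ((p + q : ℕ) : ℝ) ^ 2
      + (((q + 1 : ℕ) : ℝ) / (p + q : ℕ)) ^ 2 ≤ 1 := by
    rw [div_pow, div_pow, ← add_div, ← add_div, div_le_one (by positivity)]
    push_cast
    exact sq_add_add_add_one_sq_le hP (by linarith)
  calc _ ≤ ((p : ℝ) / (p + q : ℕ)) ^ 2 * callBound d (p + q)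
        + (q : ℝ) / ((p + q : ℕ) : ℝ) ^ 2 * callBound d (p + q)
        + (((q + 1 : ℕ) : ℝ) / (p + q : ℕ)) ^ 2 * callBound d (p + q) := by
        refine add_le_add (add_le_add ?_ ?_) ?_
        · exact pow_three_mul_callBound_le d (by omega) (by omega)
        · exact mul_sq_mul_callBound_pred_le hd (by omega) (by omega)
        · exact callBound_le_sq_mul d (by omega) hn
    _ ≤ callBound d (p + q) := by
        rw [← add_mul, ← add_mul]
        exact mul_le_of_le_one_left (callBound_nonneg d _) hsum

/-- The recursion bound on the number of oracle calls: if `f(n,0) = 0`, `f(n,d) = 1` for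
`1 ≤ n ≤ 3` and `d > 0`, and for `n ≥ 4`, `d ∈ {1,2,3}` there is `2 ≤ p ≤ ⌊n/2⌋` with
`f(n,d) ≤ (d+1)³ f(p,d) + d(d+1)² f(n-p,d-1) + f(n-p+1,d)`, then
`f(n,d) ≤ (d+1)^{3d} · n^{d + 3·log₂(d+1) + 2}` for all `n ≥ 1`, `d ≤ 3`. -/
theorem oracle_calls_bound (f : ℕ → ℕ → ℝ)
    (h0 : ∀ n, 1 ≤ n → f n 0 = 0)
    (h1 : ∀ n d, 1 ≤ n → n ≤ 3 → 0 < d → f n d = 1)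
    (hrec : ∀ n d, 4 ≤ n → (d = 1 ∨ d = 2 ∨ d = 3) →
      ∃ p, 2 ≤ p ∧ p ≤ n / 2 ∧
        f n d ≤ ((d : ℝ) + 1) ^ 3 * f p d + (d : ℝ) * ((d : ℝ) + 1) ^ 2 * f (n - p) (d - 1)
          + f (n - p + 1) d) :
    ∀ n d, 1 ≤ n → d ≤ 3 →
      f n d ≤ ((d : ℝ) + 1) ^ (3 * d) *
        (n : ℝ) ^ ((d : ℝ) + 3 * Real.logb 2 ((d : ℝ) + 1) + 2) := by
  intro n
  induction n using Nat.strong_induction_on with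
  | _ n ih =>
  intro d hn hd
  change f n d ≤ callBound d n
  rcases Nat.eq_zero_or_pos d with rfl | hd0
  · rw [h0 n hn]
    exact callBound_nonneg 0 n
  rcases le_or_gt n 3 with hn3 | hn4
  · rw [h1 n d hn hn3 hd0]
    exact one_le_callBound d hn
  obtain ⟨p, hp, hpn, hf⟩ := hrec n d hn4 (by omega)
  obtain ⟨q, rfl⟩ : ∃ q, n = p + q := ⟨n - p, by omega⟩
  rw [Nat.add_sub_cancel_left] at hf
  refine hf.trans (le_trans ?_ (callBound_recursion hd0 hp (by omega)))
  gcongr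
  · exact ih p (by omega) d (by omega) hd
  · exact ih q (by omega) (d - 1) (by omega) (by omega)
  · exact ih (q + 1) (by omega) d (by omega) hd
end

section
/- Let G be a finite abelian group and suppose for each pair (α,β) in a set Π̂ ⊆ ℤ², π(α,β) ⊆ G is non-empty, and the following averaging property holds: for v ∈ D and (α,β) with (α,β), (α,β)+2v ∈ Π̂, for every r₁ ∈ π(α,β) and r₂ ∈ π((α,β)+2v), there exist r₃, r₄ ∈ π((α,β)+v) with r₁ + r₂ = r₃ + r₄. If |π(α,β)| ≥ d+1 for some d ∈ {1,2,3} and (α,β)+2v ∈ Π̂, then |π((α,β)+v)| ≥ d. -/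
/-!
Fix `r₂ ∈ π(p + 2v)`. The averaging property puts every translate `r₁ + r₂`, `r₁ ∈ π p`, into the
sumset `π(p + v) + π(p + v)`, which has at most `n(n+1)/2` elements when `n = |π(p + v)|`.
As `d(d-1)/2 < d + 1` for `d ≤ 3`, a set of size `n ≤ d - 1` cannot host `d + 1` distinct sums.
-/

open Finset
open scoped Pointwise

namespace Finset

variable {α : Type*} [DecidableEq α]

theorem card_add_self_le_choose_two [AddCommMagma α] (s : Finset α) :
    #(s + s) ≤ (#s + 1).choose 2 := by
  have hsub : s + s ⊆ s.sym2.image (Sym2.lift ⟨(· + ·), add_comm⟩) := by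
    intro x hx
    obtain ⟨a, ha, b, hb, rfl⟩ := mem_add.1 hx
    exact mem_image.2 ⟨s(a, b), mk_mem_sym2_iff.2 ⟨ha, hb⟩, rfl⟩
  calc #(s + s) ≤ #(s.sym2.image _) := card_le_card hsub
    _ ≤ #s.sym2 := card_image_le
    _ = (#s + 1).choose 2 := card_sym2 s

theorem card_le_choose_two_of_add_singleton_subset [AddCancelCommMonoid α]
    {s t : Finset α} {b : α} (h : s + {b} ⊆ t + t) : #s ≤ (#t + 1).choose 2 := by
  calc #s = #(s + {b}) := (card_add_singleton s b).symm
    _ ≤ #(t + t) := card_le_card h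
    _ ≤ (#t + 1).choose 2 := card_add_self_le_choose_two t

end Finset

theorem Nat.le_of_succ_le_choose_two {d n : ℕ} (hd : d ≤ 3) (h : d + 1 ≤ (n + 1).choose 2) :
    d ≤ n := by
  by_contra! hn
  interval_cases d <;> interval_cases n <;> simp [Nat.choose] at h

theorem pattern_propagation_general {G : Type*} [AddCommGroup G]
    (P : Set (ℤ × ℤ)) (D : Set (ℤ × ℤ)) (π : ℤ × ℤ → Finset G)
    (hne : ∀ p ∈ P, (π p).Nonempty)
    (havg : ∀ v ∈ D, ∀ p ∈ P, p + 2 • v ∈ P →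
      ∀ r₁ ∈ π p, ∀ r₂ ∈ π (p + 2 • v),
        ∃ r₃ ∈ π (p + v), ∃ r₄ ∈ π (p + v), r₁ + r₂ = r₃ + r₄)
    (d : ℕ) (hd : d = 1 ∨ d = 2 ∨ d = 3)
    (p : ℤ × ℤ) (hp : p ∈ P) (v : ℤ × ℤ) (hv : v ∈ D)
    (hcard : d + 1 ≤ (π p).card) (h2v : p + 2 • v ∈ P) :
    d ≤ (π (p + v)).card := by
  classical
  obtain ⟨r₂, hr₂⟩ := hne _ h2v
  have htranslate : π p + {r₂} ⊆ π (p + v) + π (p + v) := by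
    intro x hx
    obtain ⟨r₁, hr₁, b, hb, rfl⟩ := mem_add.1 hx
    rw [mem_singleton.1 hb]
    obtain ⟨r₃, hr₃, r₄, hr₄, hsum⟩ := havg v hv p hp h2v r₁ hr₁ r₂ hr₂
    exact hsum ▸ add_mem_add hr₃ hr₄
  exact Nat.le_of_succ_le_choose_two (by omega)
    (hcard.trans (card_le_choose_two_of_add_singleton_subset htranslate))

/-- Under the averaging property, if `|π(α,β)| ≥ d+1` for `d ∈ {1,2,3}` and
`(α,β) + 2v ∈ Π̂`, then `|π((α,β)+v)| ≥ d`. -/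
theorem pattern_propagation {G : Type*} [AddCommGroup G] [Fintype G]
    (P : Set (ℤ × ℤ)) (D : Set (ℤ × ℤ)) (π : ℤ × ℤ → Finset G)
    (hne : ∀ p ∈ P, (π p).Nonempty)
    (havg : ∀ v ∈ D, ∀ p ∈ P, p + 2 • v ∈ P →
      ∀ r₁ ∈ π p, ∀ r₂ ∈ π (p + 2 • v),
        ∃ r₃ ∈ π (p + v), ∃ r₄ ∈ π (p + v), r₁ + r₂ = r₃ + r₄)
    (d : ℕ) (hd : d = 1 ∨ d = 2 ∨ d = 3)
    (p : ℤ × ℤ) (hp : p ∈ P) (v : ℤ × ℤ) (hv : v ∈ D)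
    (hcard : d + 1 ≤ (π p).card) (h2v : p + 2 • v ∈ P) :
    d ≤ (π (p + v)).card :=
  pattern_propagation_general P D π hne havg d hd p hp v hv hcard h2v
end
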